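/- arXiv:math/9804162 — 3 statements merged into one kernel-verified Lean document; each statement's English description precedes it below -/
import Mathlib

section
/- Let φ : ℝ³ → ℝ be a smooth function of (x, y, t) that is nowhere zero and satisfies the backward heat-type equation φ_t - φ_xx = 0. Then the functions u(x,y,t) = -2 φ_x/φ and h(x,y,t) = -2 φ_x φ_y/φ² + 2 φ_xy/φ - 1 satisfy the (2+1)-dimensional dispersive long wave equations: u_yt + h_xx + (1/2)(u²)_xy = 0 and h_t + (u h + u + u_xy)_x = 0. -/
noncomputable def pdx (f : ℝ → ℝ → ℝ → ℝ) : ℝ → ℝ → ℝ → ℝ :=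
  fun x y t => deriv (fun x' => f x' y t) x

noncomputable def pdy (f : ℝ → ℝ → ℝ → ℝ) : ℝ → ℝ → ℝ → ℝ :=
  fun x y t => deriv (fun y' => f x y' t) y

noncomputable def pdt (f : ℝ → ℝ → ℝ → ℝ) : ℝ → ℝ → ℝ → ℝ :=
  fun x y t => deriv (fun t' => f x y t') t

abbrev unc3 (f : ℝ → ℝ → ℝ → ℝ) : ℝ × ℝ × ℝ → ℝ := fun p => f p.1 p.2.1 p.2.2

abbrev Sm (f : ℝ → ℝ → ℝ → ℝ) : Prop := ContDiff ℝ (⊤ : ℕ∞) (unc3 f)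

lemma fe3 {F G : ℝ → ℝ → ℝ → ℝ} (h : ∀ x y t, F x y t = G x y t) : F = G :=
  funext fun x => funext fun y => funext fun t => h x y t

lemma cf3 {F G : ℝ → ℝ → ℝ → ℝ} (h : F = G) (x y t : ℝ) : F x y t = G x y t := by rw [h]

lemma lineX (y t x : ℝ) : HasDerivAt (fun x' : ℝ => ((x', y, t) : ℝ × ℝ × ℝ)) (1, 0, 0) x :=
  (hasDerivAt_id x).prodMk (hasDerivAt_const x (y, t))

lemma lineY (x t y : ℝ) : HasDerivAt (fun y' : ℝ => ((x, y', t) : ℝ × ℝ × ℝ)) (0, 1, 0) y :=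
  (hasDerivAt_const y x).prodMk ((hasDerivAt_id y).prodMk (hasDerivAt_const y t))

lemma lineT (x y t : ℝ) : HasDerivAt (fun t' : ℝ => ((x, y, t') : ℝ × ℝ × ℝ)) (0, 0, 1) t :=
  (hasDerivAt_const t x).prodMk ((hasDerivAt_const t y).prodMk (hasDerivAt_id t))

variable {f g : ℝ → ℝ → ℝ → ℝ}

lemma hasD_x (hf : Sm f) (x y t : ℝ) :
    HasDerivAt (fun x' => f x' y t) (pdx f x y t) x := by
  have h : DifferentiableAt ℝ ((unc3 f) ∘ (fun x' : ℝ => ((x', y, t) : ℝ × ℝ × ℝ))) x :=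
    DifferentiableAt.comp x (hf.differentiable (by simp) (x, y, t)) (lineX y t x).differentiableAt
  exact h.hasDerivAt

lemma hasD_y (hf : Sm f) (x y t : ℝ) :
    HasDerivAt (fun y' => f x y' t) (pdy f x y t) y := by
  have h : DifferentiableAt ℝ ((unc3 f) ∘ (fun y' : ℝ => ((x, y', t) : ℝ × ℝ × ℝ))) y :=
    DifferentiableAt.comp y (hf.differentiable (by simp) (x, y, t)) (lineY x t y).differentiableAt
  exact h.hasDerivAt

lemma hasD_t (hf : Sm f) (x y t : ℝ) :
    HasDerivAt (fun t' => f x y t') (pdt f x y t) t := by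
  have h : DifferentiableAt ℝ ((unc3 f) ∘ (fun t' : ℝ => ((x, y, t') : ℝ × ℝ × ℝ))) t :=
    DifferentiableAt.comp t (hf.differentiable (by simp) (x, y, t)) (lineT x y t).differentiableAt
  exact h.hasDerivAt

lemma pdx_repr (hf : Sm f) (x y t : ℝ) :
    pdx f x y t = fderiv ℝ (unc3 f) (x, y, t) (1, 0, 0) :=
  by exact (((hf.differentiable (by simp) (x, y, t)).hasFDerivAt).comp_hasDerivAt x (lineX y t x)).deriv

lemma pdy_repr (hf : Sm f) (x y t : ℝ) :
    pdy f x y t = fderiv ℝ (unc3 f) (x, y, t) (0, 1, 0) :=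
  by exact (((hf.differentiable (by simp) (x, y, t)).hasFDerivAt).comp_hasDerivAt y (lineY x t y)).deriv

lemma pdt_repr (hf : Sm f) (x y t : ℝ) :
    pdt f x y t = fderiv ℝ (unc3 f) (x, y, t) (0, 0, 1) :=
  by exact (((hf.differentiable (by simp) (x, y, t)).hasFDerivAt).comp_hasDerivAt t (lineT x y t)).deriv

lemma Sm_pd_aux (hf : Sm f) (v : ℝ × ℝ × ℝ) :
    ContDiff ℝ (⊤ : ℕ∞) (fun p : ℝ × ℝ × ℝ => fderiv ℝ (unc3 f) p v) :=
  (hf.fderiv_right (m := (⊤ : ℕ∞)) (by simp)).clm_apply contDiff_const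

lemma Sm_pdx (hf : Sm f) : Sm (pdx f) := by
  have e : unc3 (pdx f) = fun p : ℝ × ℝ × ℝ => fderiv ℝ (unc3 f) p (1, 0, 0) :=
    funext fun p => pdx_repr hf p.1 p.2.1 p.2.2
  show ContDiff ℝ (⊤ : ℕ∞) (unc3 (pdx f))
  rw [e]; exact Sm_pd_aux hf _

lemma Sm_pdy (hf : Sm f) : Sm (pdy f) := by
  have e : unc3 (pdy f) = fun p : ℝ × ℝ × ℝ => fderiv ℝ (unc3 f) p (0, 1, 0) :=
    funext fun p => pdy_repr hf p.1 p.2.1 p.2.2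
  show ContDiff ℝ (⊤ : ℕ∞) (unc3 (pdy f))
  rw [e]; exact Sm_pd_aux hf _

lemma Sm_pdt (hf : Sm f) : Sm (pdt f) := by
  have e : unc3 (pdt f) = fun p : ℝ × ℝ × ℝ => fderiv ℝ (unc3 f) p (0, 0, 1) :=
    funext fun p => pdt_repr hf p.1 p.2.1 p.2.2
  show ContDiff ℝ (⊤ : ℕ∞) (unc3 (pdt f))
  rw [e]; exact Sm_pd_aux hf _

lemma hasD_apply {A : ℝ × ℝ × ℝ → (ℝ × ℝ × ℝ) →L[ℝ] ℝ}
    (hA : Differentiable ℝ A) {L : ℝ → ℝ × ℝ × ℝ} {v : ℝ × ℝ × ℝ} {s : ℝ}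
    (hL : HasDerivAt L v s) (e : ℝ × ℝ × ℝ) :
    HasDerivAt (fun r => A (L r) e) (fderiv ℝ A (L s) v e) s := by
  have h1 : HasFDerivAt (fun q => A q e)
      ((ContinuousLinearMap.apply ℝ ℝ e).comp (fderiv ℝ A (L s))) (L s) :=
    ((ContinuousLinearMap.apply ℝ ℝ e).hasFDerivAt).comp (L s) (hA (L s)).hasFDerivAt
  exact h1.comp_hasDerivAt s hL

lemma pd2_symm (hf : Sm f) (p v w' : ℝ × ℝ × ℝ) :
    fderiv ℝ (fderiv ℝ (unc3 f)) p v w' = fderiv ℝ (fderiv ℝ (unc3 f)) p w' v :=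
  second_derivative_symmetric (fun q => (hf.differentiable (by simp) q).hasFDerivAt)
    (((hf.fderiv_right (m := (⊤ : ℕ∞)) (by simp)).differentiable (by simp) p).hasFDerivAt) v w'

lemma comm_xy (hf : Sm f) : pdy (pdx f) = pdx (pdy f) := by
  have hA := (hf.fderiv_right (m := (⊤ : ℕ∞)) (by simp)).differentiable (by simp)
  have hx : pdx f = fun a b c => fderiv ℝ (unc3 f) (a, b, c) (1, 0, 0) :=
    fe3 (pdx_repr hf)
  have hy : pdy f = fun a b c => fderiv ℝ (unc3 f) (a, b, c) (0, 1, 0) :=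
    fe3 (pdy_repr hf)
  apply fe3; intro x y t
  have e1 : pdy (pdx f) x y t = fderiv ℝ (fderiv ℝ (unc3 f)) (x, y, t) (0, 1, 0) (1, 0, 0) := by
    rw [hx]; exact (hasD_apply hA (lineY x t y) _).deriv
  have e2 : pdx (pdy f) x y t = fderiv ℝ (fderiv ℝ (unc3 f)) (x, y, t) (1, 0, 0) (0, 1, 0) := by
    rw [hy]; exact (hasD_apply hA (lineX y t x) _).deriv
  rw [e1, e2, pd2_symm hf]

lemma comm_ty (hf : Sm f) : pdy (pdt f) = pdt (pdy f) := by
  have hA := (hf.fderiv_right (m := (⊤ : ℕ∞)) (by simp)).differentiable (by simp)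
  have ht : pdt f = fun a b c => fderiv ℝ (unc3 f) (a, b, c) (0, 0, 1) :=
    fe3 (pdt_repr hf)
  have hy : pdy f = fun a b c => fderiv ℝ (unc3 f) (a, b, c) (0, 1, 0) :=
    fe3 (pdy_repr hf)
  apply fe3; intro x y t
  have e1 : pdy (pdt f) x y t = fderiv ℝ (fderiv ℝ (unc3 f)) (x, y, t) (0, 1, 0) (0, 0, 1) := by
    rw [ht]; exact (hasD_apply hA (lineY x t y) _).deriv
  have e2 : pdt (pdy f) x y t = fderiv ℝ (fderiv ℝ (unc3 f)) (x, y, t) (0, 0, 1) (0, 1, 0) := by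
    rw [hy]; exact (hasD_apply hA (lineT x y t) _).deriv
  rw [e1, e2, pd2_symm hf]

lemma comm_tx (hf : Sm f) : pdt (pdx f) = pdx (pdt f) := by
  have hA := (hf.fderiv_right (m := (⊤ : ℕ∞)) (by simp)).differentiable (by simp)
  have ht : pdt f = fun a b c => fderiv ℝ (unc3 f) (a, b, c) (0, 0, 1) :=
    fe3 (pdt_repr hf)
  have hx : pdx f = fun a b c => fderiv ℝ (unc3 f) (a, b, c) (1, 0, 0) :=
    fe3 (pdx_repr hf)
  apply fe3; intro x y t
  have e1 : pdt (pdx f) x y t = fderiv ℝ (fderiv ℝ (unc3 f)) (x, y, t) (0, 0, 1) (1, 0, 0) := by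
    rw [hx]; exact (hasD_apply hA (lineT x y t) _).deriv
  have e2 : pdx (pdt f) x y t = fderiv ℝ (fderiv ℝ (unc3 f)) (x, y, t) (1, 0, 0) (0, 0, 1) := by
    rw [ht]; exact (hasD_apply hA (lineX y t x) _).deriv
  rw [e1, e2, pd2_symm hf]

noncomputable def GG (φ : ℝ → ℝ → ℝ → ℝ) : ℝ → ℝ → ℝ → ℝ := fun x y t => (φ x y t)⁻¹
noncomputable def WW (φ : ℝ → ℝ → ℝ → ℝ) : ℝ → ℝ → ℝ → ℝ :=
  fun x y t => pdx φ x y t * GG φ x y t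

lemma GG_apply (φ : ℝ → ℝ → ℝ → ℝ) (x y t : ℝ) : GG φ x y t = (φ x y t)⁻¹ := rfl
lemma WW_apply (φ : ℝ → ℝ → ℝ → ℝ) (x y t : ℝ) :
    WW φ x y t = pdx φ x y t * GG φ x y t := rfl

section Burgers
variable {φ : ℝ → ℝ → ℝ → ℝ}

lemma Sm_GG (hφ : Sm φ) (hne : ∀ x y t, φ x y t ≠ 0) : Sm (GG φ) := hφ.inv fun p => hne p.1 p.2.1 p.2.2

lemma Sm_WW (hφ : Sm φ) (hne : ∀ x y t, φ x y t ≠ 0) : Sm (WW φ) := (Sm_pdx hφ).mul (Sm_GG hφ hne)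

lemma GGx (hφ : Sm φ) (hne : ∀ x y t, φ x y t ≠ 0) : pdx (GG φ) = fun x y t => -pdx φ x y t * (GG φ x y t * GG φ x y t) := by
  apply fe3; intro x y t
  have e : pdx (GG φ) x y t = -pdx φ x y t / φ x y t ^ 2 :=
    ((hasD_x hφ x y t).inv (hne x y t)).deriv
  rw [e]; simp only [GG_apply]; rw [div_eq_mul_inv, pow_two, mul_inv]

lemma GGy (hφ : Sm φ) (hne : ∀ x y t, φ x y t ≠ 0) : pdy (GG φ) = fun x y t => -pdy φ x y t * (GG φ x y t * GG φ x y t) := by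
  apply fe3; intro x y t
  have e : pdy (GG φ) x y t = -pdy φ x y t / φ x y t ^ 2 :=
    ((hasD_y hφ x y t).inv (hne x y t)).deriv
  rw [e]; simp only [GG_apply]; rw [div_eq_mul_inv, pow_two, mul_inv]

lemma GGt (hφ : Sm φ) (hne : ∀ x y t, φ x y t ≠ 0) : pdt (GG φ) = fun x y t => -pdt φ x y t * (GG φ x y t * GG φ x y t) := by
  apply fe3; intro x y t
  have e : pdt (GG φ) x y t = -pdt φ x y t / φ x y t ^ 2 :=
    ((hasD_t hφ x y t).inv (hne x y t)).deriv
  rw [e]; simp only [GG_apply]; rw [div_eq_mul_inv, pow_two, mul_inv]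

lemma WWx (hφ : Sm φ) (hne : ∀ x y t, φ x y t ≠ 0) : pdx (WW φ) = fun x y t =>
    pdx (pdx φ) x y t * GG φ x y t + pdx φ x y t * pdx (GG φ) x y t :=
  fe3 fun x y t => ((hasD_x (Sm_pdx hφ) x y t).mul (hasD_x (Sm_GG hφ hne) x y t)).deriv

lemma WWy (hφ : Sm φ) (hne : ∀ x y t, φ x y t ≠ 0) : pdy (WW φ) = fun x y t =>
    pdy (pdx φ) x y t * GG φ x y t + pdx φ x y t * pdy (GG φ) x y t :=
  fe3 fun x y t => ((hasD_y (Sm_pdx hφ) x y t).mul (hasD_y (Sm_GG hφ hne) x y t)).deriv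

lemma heat_fun (hheat : ∀ x y t, pdt φ x y t - pdx (pdx φ) x y t = 0) : pdt φ = pdx (pdx φ) :=
  fe3 fun x y t => sub_eq_zero.mp (hheat x y t)

lemma burgers (hφ : Sm φ) (hne : ∀ x y t, φ x y t ≠ 0)
    (hheat : ∀ x y t, pdt φ x y t - pdx (pdx φ) x y t = 0) : pdt (WW φ) = fun x y t =>
    pdx (pdx (WW φ)) x y t + 2 * WW φ x y t * pdx (WW φ) x y t := by
  have Sφx := Sm_pdx hφ
  have Sφxx := Sm_pdx Sφx
  have Sg := Sm_GG hφ hne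
  have Sgx := Sm_pdx Sg
  apply fe3; intro x y t
  have egx : pdx (GG φ) x y t = -pdx φ x y t * (GG φ x y t * GG φ x y t) :=
    cf3 (GGx hφ hne) x y t
  have egt : pdt (GG φ) x y t = -pdx (pdx φ) x y t * (GG φ x y t * GG φ x y t) := by
    have h1 : pdt (GG φ) x y t = -pdt φ x y t * (GG φ x y t * GG φ x y t) :=
      cf3 (GGt hφ hne) x y t
    rw [h1, heat_fun hheat]
  have ewt : pdt (WW φ) x y t
      = pdt (pdx φ) x y t * GG φ x y t + pdx φ x y t * pdt (GG φ) x y t :=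
    ((hasD_t Sφx x y t).mul (hasD_t Sg x y t)).deriv
  have ehtx : pdt (pdx φ) x y t = pdx (pdx (pdx φ)) x y t := by
    rw [comm_tx hφ, heat_fun hheat]
  have ewx : pdx (WW φ) x y t
      = pdx (pdx φ) x y t * GG φ x y t + pdx φ x y t * pdx (GG φ) x y t :=
    cf3 (WWx hφ hne) x y t
  have ewxx : pdx (pdx (WW φ)) x y t
      = pdx (pdx (pdx φ)) x y t * GG φ x y t + pdx (pdx φ) x y t * pdx (GG φ) x y t
        + (pdx (pdx φ) x y t * pdx (GG φ) x y t + pdx φ x y t * pdx (pdx (GG φ)) x y t) := by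
    conv_lhs => rw [WWx hφ hne]
    exact (((hasD_x Sφxx x y t).mul (hasD_x Sg x y t)).add
      ((hasD_x Sφx x y t).mul (hasD_x Sgx x y t))).deriv
  have egxx : pdx (pdx (GG φ)) x y t
      = -pdx (pdx φ) x y t * (GG φ x y t * GG φ x y t)
        + -pdx φ x y t * (pdx (GG φ) x y t * GG φ x y t + GG φ x y t * pdx (GG φ) x y t) := by
    conv_lhs => rw [GGx hφ hne]
    exact ((hasD_x Sφx x y t).neg.mul
      ((hasD_x Sg x y t).mul (hasD_x Sg x y t))).deriv
  rw [ewt, ehtx, egt, ewxx, egxx, ewx, egx, WW_apply]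
  ring

end Burgers

/-- If `φ` is smooth, nowhere zero, and satisfies `φ_t - φ_xx = 0`, then
`u = -2 φ_x / φ` and `h = -2 φ_x φ_y / φ² + 2 φ_xy / φ - 1` satisfy the
(2+1)-dimensional dispersive long wave equations. -/
theorem dlw_transform_minus (φ : ℝ → ℝ → ℝ → ℝ)
    (hφ : ContDiff ℝ (⊤ : ℕ∞) (fun p : ℝ × ℝ × ℝ => φ p.1 p.2.1 p.2.2))
    (hne : ∀ x y t, φ x y t ≠ 0)
    (hheat : ∀ x y t, pdt φ x y t - pdx (pdx φ) x y t = 0)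
    (u h : ℝ → ℝ → ℝ → ℝ)
    (hu : u = fun x y t => -2 * pdx φ x y t / φ x y t)
    (hh : h = fun x y t =>
      -2 * pdx φ x y t * pdy φ x y t / (φ x y t) ^ 2
        + 2 * pdy (pdx φ) x y t / φ x y t - 1) :
    (∀ x y t, pdt (pdy u) x y t + pdx (pdx h) x y t
        + (1 / 2) * pdy (pdx (fun a b c => (u a b c) ^ 2)) x y t = 0) ∧
    (∀ x y t, pdt h x y t
        + pdx (fun a b c => u a b c * h a b c + u a b c + pdy (pdx u) a b c) x y t = 0) := by
  have hφ' : Sm φ := hφ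
  have Sφx : Sm (pdx φ) := Sm_pdx hφ'
  have Sg : Sm (GG φ) := Sm_GG hφ' hne
  have Sw : Sm (WW φ) := Sm_WW hφ' hne
  have Swx : Sm (pdx (WW φ)) := Sm_pdx Sw
  have Swy : Sm (pdy (WW φ)) := Sm_pdy Sw
  have Swxx : Sm (pdx (pdx (WW φ))) := Sm_pdx Swx
  have Swxy : Sm (pdy (pdx (WW φ))) := Sm_pdy Swx
  have Swyx : Sm (pdx (pdy (WW φ))) := Sm_pdx Swy
  have U : u = fun x y t => -2 * WW φ x y t := by
    rw [hu]; apply fe3; intro x y t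
    show -2 * pdx φ x y t / φ x y t = -2 * WW φ x y t
    rw [WW_apply, GG_apply, div_eq_mul_inv, mul_assoc]
  have Hh : h = fun x y t => 2 * pdy (WW φ) x y t - 1 := by
    rw [hh]; apply fe3; intro x y t
    show -2 * pdx φ x y t * pdy φ x y t / (φ x y t) ^ 2
        + 2 * pdy (pdx φ) x y t / φ x y t - 1 = 2 * pdy (WW φ) x y t - 1
    have e1 : pdy (WW φ) x y t
        = pdy (pdx φ) x y t * GG φ x y t + pdx φ x y t * pdy (GG φ) x y t :=
      cf3 (WWy hφ' hne) x y t
    have e2 : pdy (GG φ) x y t = -pdy φ x y t * (GG φ x y t * GG φ x y t) :=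
      cf3 (GGy hφ' hne) x y t
    have h0 := hne x y t
    rw [e1, e2, GG_apply]
    field_simp
    ring
  have B := burgers hφ' hne hheat
  have A1 : pdy (fun x y t => -2 * WW φ x y t) = fun x y t => -2 * pdy (WW φ) x y t :=
    fe3 fun x y t => ((hasD_y Sw x y t).const_mul (-2)).deriv
  have B1 : pdx (fun x y t => 2 * pdy (WW φ) x y t - 1)
      = fun x y t => 2 * pdx (pdy (WW φ)) x y t :=
    fe3 fun x y t => (((hasD_x Swy x y t).const_mul 2).sub_const 1).deriv
  constructor
  · intro x y t
    simp only [U, Hh]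
    rw [A1]
    have A2 : pdt (fun x y t => -2 * pdy (WW φ) x y t) x y t
        = -2 * pdt (pdy (WW φ)) x y t :=
      ((hasD_t Swy x y t).const_mul (-2)).deriv
    rw [A2, ← comm_ty Sw, B]
    have A3 : pdy (fun x y t =>
          pdx (pdx (WW φ)) x y t + 2 * WW φ x y t * pdx (WW φ) x y t) x y t
        = pdy (pdx (pdx (WW φ))) x y t
          + (2 * pdy (WW φ) x y t * pdx (WW φ) x y t
             + 2 * WW φ x y t * pdy (pdx (WW φ)) x y t) :=
      ((hasD_y Swxx x y t).add
        (((hasD_y Sw x y t).const_mul 2).mul (hasD_y Swx x y t))).deriv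
    rw [A3, B1]
    have B2 : pdx (fun x y t => 2 * pdx (pdy (WW φ)) x y t) x y t
        = 2 * pdx (pdx (pdy (WW φ))) x y t :=
      ((hasD_x Swyx x y t).const_mul 2).deriv
    rw [B2, ← comm_xy Sw, ← comm_xy Swx]
    have C0 : (fun a b c => (-2 * WW φ a b c) ^ 2)
        = fun x y t => 4 * WW φ x y t * WW φ x y t :=
      fe3 fun x y t => by ring
    rw [C0]
    have C1 : pdx (fun x y t => 4 * WW φ x y t * WW φ x y t)
        = fun x y t => 4 * pdx (WW φ) x y t * WW φ x y t
            + 4 * WW φ x y t * pdx (WW φ) x y t :=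
      fe3 fun x y t => (((hasD_x Sw x y t).const_mul 4).mul (hasD_x Sw x y t)).deriv
    rw [C1]
    have C2 : pdy (fun x y t => 4 * pdx (WW φ) x y t * WW φ x y t
          + 4 * WW φ x y t * pdx (WW φ) x y t) x y t
        = (4 * pdy (pdx (WW φ)) x y t * WW φ x y t
            + 4 * pdx (WW φ) x y t * pdy (WW φ) x y t)
          + (4 * pdy (WW φ) x y t * pdx (WW φ) x y t
            + 4 * WW φ x y t * pdy (pdx (WW φ)) x y t) :=
      ((((hasD_y Swx x y t).const_mul 4).mul (hasD_y Sw x y t)).add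
        (((hasD_y Sw x y t).const_mul 4).mul (hasD_y Swx x y t))).deriv
    rw [C2]
    ring
  · intro x y t
    have D1 : pdx (fun x y t => -2 * WW φ x y t)
        = fun x y t => -2 * pdx (WW φ) x y t :=
      fe3 fun x y t => ((hasD_x Sw x y t).const_mul (-2)).deriv
    have D2 : pdy (fun x y t => -2 * pdx (WW φ) x y t)
        = fun x y t => -2 * pdy (pdx (WW φ)) x y t :=
      fe3 fun x y t => ((hasD_y Swx x y t).const_mul (-2)).deriv
    simp only [U, Hh, D1, D2]
    have D0 : pdt (fun x y t => 2 * pdy (WW φ) x y t - 1) x y t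
        = 2 * pdt (pdy (WW φ)) x y t :=
      (((hasD_t Swy x y t).const_mul 2).sub_const 1).deriv
    rw [D0, ← comm_ty Sw, B]
    have A3 : pdy (fun x y t =>
          pdx (pdx (WW φ)) x y t + 2 * WW φ x y t * pdx (WW φ) x y t) x y t
        = pdy (pdx (pdx (WW φ))) x y t
          + (2 * pdy (WW φ) x y t * pdx (WW φ) x y t
             + 2 * WW φ x y t * pdy (pdx (WW φ)) x y t) :=
      ((hasD_y Swxx x y t).add
        (((hasD_y Sw x y t).const_mul 2).mul (hasD_y Swx x y t))).deriv
    rw [A3]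
    have E0 : (fun a b c => -2 * WW φ a b c * (2 * pdy (WW φ) a b c - 1)
          + -2 * WW φ a b c + -2 * pdy (pdx (WW φ)) a b c)
        = fun x y t => -4 * WW φ x y t * pdy (WW φ) x y t
            + -2 * pdy (pdx (WW φ)) x y t :=
      fe3 fun x y t => by ring
    rw [E0]
    have E1 : pdx (fun x y t => -4 * WW φ x y t * pdy (WW φ) x y t
          + -2 * pdy (pdx (WW φ)) x y t) x y t
        = (-4 * pdx (WW φ) x y t * pdy (WW φ) x y t
            + -4 * WW φ x y t * pdx (pdy (WW φ)) x y t)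
          + -2 * pdx (pdy (pdx (WW φ))) x y t :=
      ((((hasD_x Sw x y t).const_mul (-4)).mul (hasD_x Swy x y t)).add
        ((hasD_x Swxy x y t).const_mul (-2))).deriv
    rw [E1, ← comm_xy Sw, ← comm_xy Swx]
    ring
end

section
/- Let φ : ℝ³ → ℝ be a smooth nowhere-zero function of (x, y, t), and set u = -2 φ_x/φ and h = -2 φ_x φ_y/φ² + 2 φ_xy/φ - 1. Then, with ψ := φ_t - φ_xx, the following identity holds pointwise: h_t + (u h + u + u_xy)_x = (4/φ³) φ_x φ_y ψ - (2/φ²)(φ_x ψ_y + φ_y ψ_x + φ_xy ψ) + (2/φ) ψ_xy. -/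
namespace DLWaux

def S (f : ℝ → ℝ → ℝ → ℝ) : Prop := ContDiff ℝ (⊤ : ℕ∞) (fun p : ℝ × ℝ × ℝ => f p.1 p.2.1 p.2.2)

noncomputable def unc (f : ℝ → ℝ → ℝ → ℝ) : ℝ × ℝ × ℝ → ℝ := fun p => f p.1 p.2.1 p.2.2

lemma curveX (x y t : ℝ) : HasDerivAt (fun x' : ℝ => ((x', y, t) : ℝ × ℝ × ℝ)) (1, 0, 0) x :=
  (hasDerivAt_id x).prodMk ((hasDerivAt_const x y).prodMk (hasDerivAt_const x t))

lemma curveY (x y t : ℝ) : HasDerivAt (fun y' : ℝ => ((x, y', t) : ℝ × ℝ × ℝ)) (0, 1, 0) y :=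
  (hasDerivAt_const y x).prodMk ((hasDerivAt_id y).prodMk (hasDerivAt_const y t))

lemma curveT (x y t : ℝ) : HasDerivAt (fun t' : ℝ => ((x, y, t') : ℝ × ℝ × ℝ)) (0, 0, 1) t :=
  (hasDerivAt_const t x).prodMk ((hasDerivAt_const t y).prodMk (hasDerivAt_id t))

lemma S.hasDerivAt_x {f} (hf : S f) (x y t : ℝ) :
    HasDerivAt (fun x' => f x' y t) (pdx f x y t) x := by
  have h1 : HasDerivAt (fun x' => f x' y t)
      (fderiv ℝ (unc f) (x, y, t) (1, 0, 0)) x :=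
    (((hf.differentiable (by simp) (x, y, t) : DifferentiableAt ℝ (unc f) (x, y, t)).hasFDerivAt).comp_hasDerivAt x (curveX x y t) :)
  have := h1.deriv
  rw [show pdx f x y t = deriv (fun x' => f x' y t) x from rfl, this]
  exact h1

lemma S.hasDerivAt_y {f} (hf : S f) (x y t : ℝ) :
    HasDerivAt (fun y' => f x y' t) (pdy f x y t) y := by
  have h1 : HasDerivAt (fun y' => f x y' t)
      (fderiv ℝ (unc f) (x, y, t) (0, 1, 0)) y :=
    (((hf.differentiable (by simp) (x, y, t) : DifferentiableAt ℝ (unc f) (x, y, t)).hasFDerivAt).comp_hasDerivAt y (curveY x y t) :)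
  have := h1.deriv
  rw [show pdy f x y t = deriv (fun y' => f x y' t) y from rfl, this]
  exact h1

lemma S.hasDerivAt_t {f} (hf : S f) (x y t : ℝ) :
    HasDerivAt (fun t' => f x y t') (pdt f x y t) t := by
  have h1 : HasDerivAt (fun t' => f x y t')
      (fderiv ℝ (unc f) (x, y, t) (0, 0, 1)) t :=
    (((hf.differentiable (by simp) (x, y, t) : DifferentiableAt ℝ (unc f) (x, y, t)).hasFDerivAt).comp_hasDerivAt t (curveT x y t) :)
  have := h1.deriv
  rw [show pdt f x y t = deriv (fun t' => f x y t') t from rfl, this]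
  exact h1

lemma pdx_eq {f} (hf : S f) (x y t : ℝ) :
    pdx f x y t = fderiv ℝ (unc f) (x, y, t) (1, 0, 0) :=
  ((((hf.differentiable (by simp) (x, y, t) : DifferentiableAt ℝ (unc f) (x, y, t)).hasFDerivAt).comp_hasDerivAt x (curveX x y t)) :).deriv

lemma pdy_eq {f} (hf : S f) (x y t : ℝ) :
    pdy f x y t = fderiv ℝ (unc f) (x, y, t) (0, 1, 0) :=
  ((((hf.differentiable (by simp) (x, y, t) : DifferentiableAt ℝ (unc f) (x, y, t)).hasFDerivAt).comp_hasDerivAt y (curveY x y t)) :).deriv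

lemma pdt_eq {f} (hf : S f) (x y t : ℝ) :
    pdt f x y t = fderiv ℝ (unc f) (x, y, t) (0, 0, 1) :=
  ((((hf.differentiable (by simp) (x, y, t) : DifferentiableAt ℝ (unc f) (x, y, t)).hasFDerivAt).comp_hasDerivAt t (curveT x y t)) :).deriv

lemma S.pdx {f} (hf : S f) : S (pdx f) := by
  have : (fun p : ℝ × ℝ × ℝ => _root_.pdx f p.1 p.2.1 p.2.2)
      = fun p => fderiv ℝ (unc f) p (1, 0, 0) := by
    funext p
    exact pdx_eq hf p.1 p.2.1 p.2.2
  rw [S, this]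
  exact (hf.fderiv_right (by simp)).clm_apply contDiff_const

lemma S.pdy {f} (hf : S f) : S (pdy f) := by
  have : (fun p : ℝ × ℝ × ℝ => _root_.pdy f p.1 p.2.1 p.2.2)
      = fun p => fderiv ℝ (unc f) p (0, 1, 0) := by
    funext p
    exact pdy_eq hf p.1 p.2.1 p.2.2
  rw [S, this]
  exact (hf.fderiv_right (by simp)).clm_apply contDiff_const

lemma S.pdt {f} (hf : S f) : S (pdt f) := by
  have : (fun p : ℝ × ℝ × ℝ => _root_.pdt f p.1 p.2.1 p.2.2)
      = fun p => fderiv ℝ (unc f) p (0, 0, 1) := by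
    funext p
    exact pdt_eq hf p.1 p.2.1 p.2.2
  rw [S, this]
  exact (hf.fderiv_right (by simp)).clm_apply contDiff_const

lemma deriv_fderiv_apply {F : ℝ × ℝ × ℝ → ℝ} (hF : ContDiff ℝ (⊤ : ℕ∞) F)
    {c : ℝ → ℝ × ℝ × ℝ} {v : ℝ × ℝ × ℝ} {s : ℝ} (hc : HasDerivAt c v s) (w : ℝ × ℝ × ℝ) :
    HasDerivAt (fun r => fderiv ℝ F (c r) w) (fderiv ℝ (fderiv ℝ F) (c s) v w) s := by
  have h1 : HasDerivAt (fun r => fderiv ℝ F (c r)) (fderiv ℝ (fderiv ℝ F) (c s) v) s :=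
    (((hF.fderiv_right (m := 1) (WithTop.coe_le_coe.mpr le_top)).differentiable (by simp) (c s)).hasFDerivAt).comp_hasDerivAt s hc
  simpa using h1.clm_apply (hasDerivAt_const s w)

lemma symm2 {f} (hf : S f) (x y t : ℝ) (v w : ℝ × ℝ × ℝ) :
    fderiv ℝ (fderiv ℝ (unc f)) (x, y, t) v w = fderiv ℝ (fderiv ℝ (unc f)) (x, y, t) w v :=
  second_derivative_symmetric (fun q => (hf.differentiable (by simp) q).hasFDerivAt)
    (((hf.fderiv_right (m := 1) (WithTop.coe_le_coe.mpr le_top)).differentiable (by simp) (x, y, t)).hasFDerivAt) v w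

lemma swap_xy {f} (hf : S f) : pdy (_root_.pdx f) = _root_.pdx (pdy f) := by
  funext x y t
  have e1 : (fun y' => _root_.pdx f x y' t)
      = fun y' => fderiv ℝ (unc f) (x, y', t) (1, 0, 0) := funext fun y' => pdx_eq hf x y' t
  have e2 : (fun x' => pdy f x' y t)
      = fun x' => fderiv ℝ (unc f) (x', y, t) (0, 1, 0) := funext fun x' => pdy_eq hf x' y t
  have h1 : HasDerivAt (fun y' => fderiv ℝ (unc f) (x, y', t) (1, 0, 0))
      (fderiv ℝ (fderiv ℝ (unc f)) (x, y, t) (0, 1, 0) (1, 0, 0)) y :=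
    deriv_fderiv_apply hf (curveY x y t) (1, 0, 0)
  have h2 : HasDerivAt (fun x' => fderiv ℝ (unc f) (x', y, t) (0, 1, 0))
      (fderiv ℝ (fderiv ℝ (unc f)) (x, y, t) (1, 0, 0) (0, 1, 0)) x :=
    deriv_fderiv_apply hf (curveX x y t) (0, 1, 0)
  show deriv (fun y' => _root_.pdx f x y' t) y = deriv (fun x' => pdy f x' y t) x
  rw [e1, e2, h1.deriv, h2.deriv]
  exact symm2 hf x y t _ _

lemma swap_xt {f} (hf : S f) : pdt (_root_.pdx f) = _root_.pdx (pdt f) := by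
  funext x y t
  have e1 : (fun t' => _root_.pdx f x y t')
      = fun t' => fderiv ℝ (unc f) (x, y, t') (1, 0, 0) := funext fun t' => pdx_eq hf x y t'
  have e2 : (fun x' => pdt f x' y t)
      = fun x' => fderiv ℝ (unc f) (x', y, t) (0, 0, 1) := funext fun x' => pdt_eq hf x' y t
  have h1 : HasDerivAt (fun t' => fderiv ℝ (unc f) (x, y, t') (1, 0, 0))
      (fderiv ℝ (fderiv ℝ (unc f)) (x, y, t) (0, 0, 1) (1, 0, 0)) t :=
    deriv_fderiv_apply hf (curveT x y t) (1, 0, 0)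
  have h2 : HasDerivAt (fun x' => fderiv ℝ (unc f) (x', y, t) (0, 0, 1))
      (fderiv ℝ (fderiv ℝ (unc f)) (x, y, t) (1, 0, 0) (0, 0, 1)) x :=
    deriv_fderiv_apply hf (curveX x y t) (0, 0, 1)
  show deriv (fun t' => _root_.pdx f x y t') t = deriv (fun x' => pdt f x' y t) x
  rw [e1, e2, h1.deriv, h2.deriv]
  exact symm2 hf x y t _ _

lemma swap_yt {f} (hf : S f) : pdt (pdy f) = pdy (pdt f) := by
  funext x y t
  have e1 : (fun t' => pdy f x y t')
      = fun t' => fderiv ℝ (unc f) (x, y, t') (0, 1, 0) := funext fun t' => pdy_eq hf x y t'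
  have e2 : (fun y' => pdt f x y' t)
      = fun y' => fderiv ℝ (unc f) (x, y', t) (0, 0, 1) := funext fun y' => pdt_eq hf x y' t
  have h1 : HasDerivAt (fun t' => fderiv ℝ (unc f) (x, y, t') (0, 1, 0))
      (fderiv ℝ (fderiv ℝ (unc f)) (x, y, t) (0, 0, 1) (0, 1, 0)) t :=
    deriv_fderiv_apply hf (curveT x y t) (0, 1, 0)
  have h2 : HasDerivAt (fun y' => fderiv ℝ (unc f) (x, y', t) (0, 0, 1))
      (fderiv ℝ (fderiv ℝ (unc f)) (x, y, t) (0, 1, 0) (0, 0, 1)) y :=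
    deriv_fderiv_apply hf (curveY x y t) (0, 0, 1)
  show deriv (fun t' => pdy f x y t') t = deriv (fun y' => pdt f x y' t) y
  rw [e1, e2, h1.deriv, h2.deriv]
  exact symm2 hf x y t _ _

end DLWaux

open DLWaux in
/-- With `u = -2 φ_x / φ`, `h = -2 φ_x φ_y / φ² + 2 φ_xy / φ - 1` and `ψ = φ_t - φ_xx`,
one has `h_t + (u h + u + u_xy)_x
  = (4/φ³) φ_x φ_y ψ - (2/φ²)(φ_x ψ_y + φ_y ψ_x + φ_xy ψ) + (2/φ) ψ_xy`. -/
theorem dlw_identity2_minus (φ u h ψ : ℝ → ℝ → ℝ → ℝ)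
    (hφ : ContDiff ℝ (⊤ : ℕ∞) (fun p : ℝ × ℝ × ℝ => φ p.1 p.2.1 p.2.2))
    (hne : ∀ x y t, φ x y t ≠ 0)
    (hu : u = fun x y t => -2 * pdx φ x y t / φ x y t)
    (hh : h = fun x y t =>
      -2 * pdx φ x y t * pdy φ x y t / (φ x y t) ^ 2
        + 2 * pdy (pdx φ) x y t / φ x y t - 1)
    (hψ : ψ = fun x y t => pdt φ x y t - pdx (pdx φ) x y t) :
    ∀ x y t, pdt h x y t
        + pdx (fun a b c => u a b c * h a b c + u a b c + pdy (pdx u) a b c) x y t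
      = 4 / (φ x y t) ^ 3 * (pdx φ x y t * pdy φ x y t * ψ x y t)
        - 2 / (φ x y t) ^ 2 * (pdx φ x y t * pdy ψ x y t
            + pdy φ x y t * pdx ψ x y t + pdy (pdx φ) x y t * ψ x y t)
        + 2 / φ x y t * pdy (pdx ψ) x y t := by
  have Sφ : S φ := hφ
  have SAx : S (pdx φ) := Sφ.pdx
  have SAy : S (pdy φ) := Sφ.pdy
  have SAt : S (pdt φ) := Sφ.pdt
  have SAxx : S (pdx (pdx φ)) := SAx.pdx
  have SAxy : S (pdy (pdx φ)) := SAx.pdy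
  have SAxt : S (pdx (pdt φ)) := SAt.pdx
  have SAxxx : S (pdx (pdx (pdx φ))) := SAxx.pdx
  have SAxxy : S (pdy (pdx (pdx φ))) := SAxx.pdy
  -- first-stage function equalities
  have hux : pdx (fun x y t => -2 * pdx φ x y t / φ x y t)
      = fun x y t => (-2 * pdx (pdx φ) x y t * φ x y t + 2 * pdx φ x y t ^ 2) / φ x y t ^ 2 := by
    funext x y t
    exact (((SAx.hasDerivAt_x x y t).const_mul (-2)).fun_div (Sφ.hasDerivAt_x x y t)
      (hne x y t)).deriv.trans (by ring)
  have huxy : pdy (fun x y t =>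
        (-2 * pdx (pdx φ) x y t * φ x y t + 2 * pdx φ x y t ^ 2) / φ x y t ^ 2)
      = fun x y t =>
        ((-2 * pdy (pdx (pdx φ)) x y t * φ x y t - 2 * pdx (pdx φ) x y t * pdy φ x y t
            + 4 * pdx φ x y t * pdy (pdx φ) x y t) * φ x y t ^ 2
          - (-2 * pdx (pdx φ) x y t * φ x y t + 2 * pdx φ x y t ^ 2)
            * (2 * φ x y t * pdy φ x y t)) / φ x y t ^ 4 := by
    funext x y t
    exact (((((SAxx.hasDerivAt_y x y t).const_mul (-2)).fun_mul (Sφ.hasDerivAt_y x y t)).fun_add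
        (((SAx.hasDerivAt_y x y t).fun_pow 2).const_mul 2)).fun_div
        ((Sφ.hasDerivAt_y x y t).fun_pow 2) (pow_ne_zero 2 (hne x y t))).deriv.trans (by ring)
  intro x y t
  simp only [hu, hh, hψ]
  rw [show pdy (pdx (fun x y t => -2 * pdx φ x y t / φ x y t)) = _ from (hux ▸ huxy : _)]
  beta_reduce
  -- pdt of h-lambda
  rw [show pdt (fun x y t => -2 * pdx φ x y t * pdy φ x y t / φ x y t ^ 2
        + 2 * pdy (pdx φ) x y t / φ x y t - 1) x y t = _ from
    ((((((SAx.hasDerivAt_t x y t).const_mul (-2)).fun_mul (SAy.hasDerivAt_t x y t)).fun_div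
        ((Sφ.hasDerivAt_t x y t).fun_pow 2) (pow_ne_zero 2 (hne x y t))).fun_add
      (((SAxy.hasDerivAt_t x y t).const_mul 2).fun_div (Sφ.hasDerivAt_t x y t)
        (hne x y t))).sub_const 1).deriv]
  -- pdx of the big lambda
  have dU := ((SAx.hasDerivAt_x x y t).const_mul (-2)).fun_div (Sφ.hasDerivAt_x x y t) (hne x y t)
  have dH := (((((SAx.hasDerivAt_x x y t).const_mul (-2)).fun_mul (SAy.hasDerivAt_x x y t)).fun_div
      ((Sφ.hasDerivAt_x x y t).fun_pow 2) (pow_ne_zero 2 (hne x y t))).fun_add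
    (((SAxy.hasDerivAt_x x y t).const_mul 2).fun_div (Sφ.hasDerivAt_x x y t) (hne x y t))).sub_const 1
  have dP := ((((SAxxy.hasDerivAt_x x y t).const_mul (-2)).fun_mul (Sφ.hasDerivAt_x x y t)).fun_sub
      (((SAxx.hasDerivAt_x x y t).const_mul 2).fun_mul (SAy.hasDerivAt_x x y t))).fun_add
    (((SAx.hasDerivAt_x x y t).const_mul 4).fun_mul (SAxy.hasDerivAt_x x y t))
  have dQ := (((SAxx.hasDerivAt_x x y t).const_mul (-2)).fun_mul (Sφ.hasDerivAt_x x y t)).fun_add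
    (((SAx.hasDerivAt_x x y t).fun_pow 2).const_mul 2)
  have dR := ((Sφ.hasDerivAt_x x y t).const_mul 2).fun_mul (SAy.hasDerivAt_x x y t)
  have dN := (dP.fun_mul ((Sφ.hasDerivAt_x x y t).fun_pow 2)).fun_sub (dQ.fun_mul dR)
  have dL2 := dN.fun_div ((Sφ.hasDerivAt_x x y t).fun_pow 4) (pow_ne_zero 4 (hne x y t))
  have dBIG := ((dU.fun_mul dH).fun_add dU).fun_add dL2
  rw [show pdx (fun a b c =>
        -2 * pdx φ a b c / φ a b c *
              (-2 * pdx φ a b c * pdy φ a b c / φ a b c ^ 2 + 2 * pdy (pdx φ) a b c / φ a b c - 1) +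
            -2 * pdx φ a b c / φ a b c +
          ((-2 * pdy (pdx (pdx φ)) a b c * φ a b c - 2 * pdx (pdx φ) a b c * pdy φ a b c +
                  4 * pdx φ a b c * pdy (pdx φ) a b c) *
                φ a b c ^ 2 -
              (-2 * pdx (pdx φ) a b c * φ a b c + 2 * pdx φ a b c ^ 2) * (2 * φ a b c * pdy φ a b c)) /
            φ a b c ^ 4) x y t = _ from dBIG.deriv]
  -- RHS derivatives of psi
  rw [show pdy (fun x y t => pdt φ x y t - pdx (pdx φ) x y t) x y t = _ from
    ((SAt.hasDerivAt_y x y t).fun_sub (SAxx.hasDerivAt_y x y t)).deriv]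
  rw [show (pdx fun x y t => pdt φ x y t - pdx (pdx φ) x y t) = _ from
    funext fun x => funext fun y => funext fun t =>
      ((SAt.hasDerivAt_x x y t).fun_sub (SAxx.hasDerivAt_x x y t)).deriv]
  rw [show pdy (fun x y t => pdx (pdt φ) x y t - pdx (pdx (pdx φ)) x y t) x y t = _ from
    ((SAxt.hasDerivAt_y x y t).fun_sub (SAxxx.hasDerivAt_y x y t)).deriv]
  simp only [← swap_xy Sφ, ← swap_xy SAx, ← swap_xy SAxx, ← swap_xt Sφ, ← swap_yt Sφ,
    ← swap_yt SAx]
  have hA := hne x y t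
  field_simp
  ring
end

section
/- Let a, b : ℝ → ℝ be smooth functions and let θ(x, y, t) = a(y)·x + a(y)²·t + b(y). Then the functions u(x, y, t) = -a(y)·(1 + tanh(θ/2)) and h(x, y, t) = (1/2)·a(y)·(a'(y)·x + 2·a(y)·a'(y)·t + b'(y))·sech²(θ/2) + a'(y)·tanh(θ/2) + a'(y) - 1 satisfy the (2+1)-dimensional dispersive long wave equations: u_yt + h_xx + (1/2)(u²)_xy = 0 and h_t + (u h + u + u_xy)_x = 0. -/
lemma sech_sq (s : ℝ) : (1 / Real.cosh s) ^ 2 = 1 - Real.tanh s ^ 2 := by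
  have hc := Real.cosh_pos s
  rw [Real.tanh_eq_sinh_div_cosh]
  have h := Real.cosh_sq_sub_sinh_sq s
  field_simp
  linarith

lemma tanh_hasDerivAt (x : ℝ) : HasDerivAt Real.tanh (1 - Real.tanh x ^ 2) x := by
  have hc : Real.cosh x ≠ 0 := (Real.cosh_pos x).ne'
  have h := (Real.hasDerivAt_sinh x).div (Real.hasDerivAt_cosh x) hc
  have he : Real.tanh = fun z => Real.sinh z / Real.cosh z := by
    funext z; exact Real.tanh_eq_sinh_div_cosh z
  rw [he]
  refine h.congr_deriv ?_
  beta_reduce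
  have h2 := Real.cosh_sq_sub_sinh_sq x
  field_simp

lemma tanh_comp_hasDerivAt {f : ℝ → ℝ} {f' z : ℝ} (hf : HasDerivAt f f' z) :
    HasDerivAt (fun w => Real.tanh (f w / 2))
      ((1 - Real.tanh (f z / 2) ^ 2) * (f' / 2)) z :=
  by have := (tanh_hasDerivAt (f z / 2)).comp z (hf.div_const 2); exact this

noncomputable def T (a b : ℝ → ℝ) (x y t : ℝ) : ℝ :=
  Real.tanh ((a y * x + a y ^ 2 * t + b y) / 2)

noncomputable def G (a b : ℝ → ℝ) (x y t : ℝ) : ℝ :=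
  deriv a y * x + 2 * a y * deriv a y * t + deriv b y

section
variable (a b : ℝ → ℝ)

lemma Tx (x y t : ℝ) :
    HasDerivAt (fun x' => T a b x' y t) ((1 - T a b x y t ^ 2) * (a y / 2)) x := by
  have hθ : HasDerivAt (fun x' => a y * x' + a y ^ 2 * t + b y) (a y) x := by
    simpa using (((hasDerivAt_id x).const_mul (a y)).add_const (a y ^ 2 * t)).add_const (b y)
  exact tanh_comp_hasDerivAt hθ

lemma Tt (x y t : ℝ) :
    HasDerivAt (fun t' => T a b x y t') ((1 - T a b x y t ^ 2) * (a y ^ 2 / 2)) t := by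
  have hθ : HasDerivAt (fun t' => a y * x + a y ^ 2 * t' + b y) (a y ^ 2) t := by
    simpa using ((((hasDerivAt_id t).const_mul (a y ^ 2)).const_add (a y * x)).add_const (b y))
  exact tanh_comp_hasDerivAt hθ

lemma Ty (ha : ContDiff ℝ (⊤ : ℕ∞) a) (hb : ContDiff ℝ (⊤ : ℕ∞) b) (x y t : ℝ) :
    HasDerivAt (fun y' => T a b x y' t) ((1 - T a b x y t ^ 2) * (G a b x y t / 2)) y := by
  have hay : HasDerivAt a (deriv a y) y := (ha.differentiable (by simp) y).hasDerivAt
  have hby : HasDerivAt b (deriv b y) y := (hb.differentiable (by simp) y).hasDerivAt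
  have hθ : HasDerivAt (fun y' => a y' * x + a y' ^ 2 * t + b y')
      (G a b x y t) y := by
    have h1 : HasDerivAt (fun y' => a y' * x) (deriv a y * x) y := hay.mul_const x
    have h2 : HasDerivAt (fun y' => a y' ^ 2 * t) (2 * a y * deriv a y * t) y := by
      have := (hay.pow 2).mul_const t
      refine this.congr_deriv ?_; (try simp only [Pi.neg_apply, Pi.pow_apply, Pi.mul_apply, Pi.add_apply, Pi.sub_apply]); ring
    exact (h1.add h2).add hby
  exact tanh_comp_hasDerivAt hθ

lemma Gx (x y t : ℝ) :
    HasDerivAt (fun x' => G a b x' y t) (deriv a y) x := by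
  simpa [G] using (((hasDerivAt_id x).const_mul (deriv a y)).add_const
    (2 * a y * deriv a y * t)).add_const (deriv b y)

lemma Gt (x y t : ℝ) :
    HasDerivAt (fun t' => G a b x y t') (2 * a y * deriv a y) t := by
  simpa [G] using ((((hasDerivAt_id t).const_mul (2 * a y * deriv a y)).const_add
    (deriv a y * x)).add_const (deriv b y))

lemma E1 (ha : ContDiff ℝ (⊤ : ℕ∞) a) (hb : ContDiff ℝ (⊤ : ℕ∞) b) :
    pdy (fun x y t => -a y * (1 + T a b x y t))
      = fun x y t => -(deriv a y * (1 + T a b x y t))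
          - a y * ((1 - T a b x y t ^ 2) * (G a b x y t / 2)) := by
  funext x y t
  simp only [pdy]
  have hay : HasDerivAt a (deriv a y) y := (ha.differentiable (by simp) y).hasDerivAt
  have H : HasDerivAt (fun y' => -a y' * (1 + T a b x y' t))
      (-(deriv a y * (1 + T a b x y t))
        - a y * ((1 - T a b x y t ^ 2) * (G a b x y t / 2))) y := by
    have h := hay.neg.mul ((Ty a b ha hb x y t).const_add 1)
    refine h.congr_deriv ?_; (try simp only [Pi.neg_apply, Pi.pow_apply, Pi.mul_apply, Pi.add_apply, Pi.sub_apply]); ring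
  rw [H.deriv]

lemma E2 :
    pdt (fun x y t => -(deriv a y * (1 + T a b x y t))
          - a y * ((1 - T a b x y t ^ 2) * (G a b x y t / 2)))
      = fun x y t => (1 - T a b x y t ^ 2) *
          (-(3 / 2) * a y ^ 2 * deriv a y
            + a y ^ 3 / 2 * G a b x y t * T a b x y t) := by
  funext x y t
  simp only [pdt]
  have hT := Tt a b x y t
  have hG := Gt a b x y t
  have H : HasDerivAt (fun t' => -(deriv a y * (1 + T a b x y t'))
        - a y * ((1 - T a b x y t' ^ 2) * (G a b x y t' / 2)))
      ((1 - T a b x y t ^ 2) *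
        (-(3 / 2) * a y ^ 2 * deriv a y
          + a y ^ 3 / 2 * G a b x y t * T a b x y t)) t := by
    have h := (((hT.const_add 1).const_mul (deriv a y)).neg).sub
      ((((hT.pow 2).const_sub 1).mul (hG.div_const 2)).const_mul (a y))
    refine h.congr_deriv ?_; (try simp only [Pi.neg_apply, Pi.pow_apply, Pi.mul_apply, Pi.add_apply, Pi.sub_apply]); ring
  rw [H.deriv]

lemma E3 :
    pdx (fun x y t => 1 / 2 * a y * G a b x y t * (1 - T a b x y t ^ 2)
          + deriv a y * T a b x y t + deriv a y - 1)
      = fun x y t => (1 - T a b x y t ^ 2) *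
          (a y * deriv a y - a y ^ 2 / 2 * G a b x y t * T a b x y t) := by
  funext x y t
  simp only [pdx]
  have hT := Tx a b x y t
  have hG := Gx a b x y t
  have H : HasDerivAt (fun x' => 1 / 2 * a y * G a b x' y t * (1 - T a b x' y t ^ 2)
        + deriv a y * T a b x' y t + deriv a y - 1)
      ((1 - T a b x y t ^ 2) *
        (a y * deriv a y - a y ^ 2 / 2 * G a b x y t * T a b x y t)) x := by
    have h := ((((hG.const_mul (1 / 2 * a y)).mul ((hT.pow 2).const_sub 1)).add
      (hT.const_mul (deriv a y))).add_const (deriv a y)).sub_const 1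
    refine h.congr_deriv ?_; (try simp only [Pi.neg_apply, Pi.pow_apply, Pi.mul_apply, Pi.add_apply, Pi.sub_apply]); ring
  rw [H.deriv]

lemma E4 :
    pdx (fun x y t => (1 - T a b x y t ^ 2) *
          (a y * deriv a y - a y ^ 2 / 2 * G a b x y t * T a b x y t))
      = fun x y t => (1 - T a b x y t ^ 2) *
          (-(3 / 2) * a y ^ 2 * deriv a y * T a b x y t
            + a y ^ 3 / 2 * G a b x y t * T a b x y t ^ 2
            - a y ^ 3 / 4 * G a b x y t * (1 - T a b x y t ^ 2)) := by
  funext x y t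
  simp only [pdx]
  have hT := Tx a b x y t
  have hG := Gx a b x y t
  have H : HasDerivAt (fun x' => (1 - T a b x' y t ^ 2) *
        (a y * deriv a y - a y ^ 2 / 2 * G a b x' y t * T a b x' y t))
      ((1 - T a b x y t ^ 2) *
        (-(3 / 2) * a y ^ 2 * deriv a y * T a b x y t
          + a y ^ 3 / 2 * G a b x y t * T a b x y t ^ 2
          - a y ^ 3 / 4 * G a b x y t * (1 - T a b x y t ^ 2))) x := by
    have h := ((hT.pow 2).const_sub 1).mul
      (((hG.const_mul (a y ^ 2 / 2)).mul hT).const_sub (a y * deriv a y))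
    refine h.congr_deriv ?_; (try simp only [Pi.neg_apply, Pi.pow_apply, Pi.mul_apply, Pi.add_apply, Pi.sub_apply]); ring
  rw [H.deriv]

lemma E5 :
    pdx (fun x y t => (-a y * (1 + T a b x y t)) ^ 2)
      = fun x y t => a y ^ 3 * (1 + T a b x y t) * (1 - T a b x y t ^ 2) := by
  funext x y t
  simp only [pdx]
  have hT := Tx a b x y t
  have H : HasDerivAt (fun x' => (-a y * (1 + T a b x' y t)) ^ 2)
      (a y ^ 3 * (1 + T a b x y t) * (1 - T a b x y t ^ 2)) x := by
    have h := ((hT.const_add 1).const_mul (-a y)).pow 2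
    refine h.congr_deriv ?_; (try simp only [Pi.neg_apply, Pi.pow_apply, Pi.mul_apply, Pi.add_apply, Pi.sub_apply]); ring
  rw [H.deriv]

lemma E6 (ha : ContDiff ℝ (⊤ : ℕ∞) a) (hb : ContDiff ℝ (⊤ : ℕ∞) b) :
    pdy (fun x y t => a y ^ 3 * (1 + T a b x y t) * (1 - T a b x y t ^ 2))
      = fun x y t => 3 * a y ^ 2 * deriv a y * (1 + T a b x y t) * (1 - T a b x y t ^ 2)
          + a y ^ 3 * ((1 - T a b x y t ^ 2) * (G a b x y t / 2))
            * (1 - 2 * T a b x y t - 3 * T a b x y t ^ 2) := by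
  funext x y t
  simp only [pdy]
  have hay : HasDerivAt a (deriv a y) y := (ha.differentiable (by simp) y).hasDerivAt
  have hT := Ty a b ha hb x y t
  have H : HasDerivAt (fun y' => a y' ^ 3 * (1 + T a b x y' t) * (1 - T a b x y' t ^ 2))
      (3 * a y ^ 2 * deriv a y * (1 + T a b x y t) * (1 - T a b x y t ^ 2)
        + a y ^ 3 * ((1 - T a b x y t ^ 2) * (G a b x y t / 2))
          * (1 - 2 * T a b x y t - 3 * T a b x y t ^ 2)) y := by
    have h := ((hay.pow 3).mul (hT.const_add 1)).mul ((hT.pow 2).const_sub 1)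
    refine h.congr_deriv ?_; (try simp only [Pi.neg_apply, Pi.pow_apply, Pi.mul_apply, Pi.add_apply, Pi.sub_apply]); ring
  rw [H.deriv]

lemma E7 :
    pdt (fun x y t => 1 / 2 * a y * G a b x y t * (1 - T a b x y t ^ 2)
          + deriv a y * T a b x y t + deriv a y - 1)
      = fun x y t => (1 - T a b x y t ^ 2) *
          (3 / 2 * a y ^ 2 * deriv a y - a y ^ 3 / 2 * G a b x y t * T a b x y t) := by
  funext x y t
  simp only [pdt]
  have hT := Tt a b x y t
  have hG := Gt a b x y t
  have H : HasDerivAt (fun t' => 1 / 2 * a y * G a b x y t' * (1 - T a b x y t' ^ 2)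
        + deriv a y * T a b x y t' + deriv a y - 1)
      ((1 - T a b x y t ^ 2) *
        (3 / 2 * a y ^ 2 * deriv a y - a y ^ 3 / 2 * G a b x y t * T a b x y t)) t := by
    have h := ((((hG.const_mul (1 / 2 * a y)).mul ((hT.pow 2).const_sub 1)).add
      (hT.const_mul (deriv a y))).add_const (deriv a y)).sub_const 1
    refine h.congr_deriv ?_; (try simp only [Pi.neg_apply, Pi.pow_apply, Pi.mul_apply, Pi.add_apply, Pi.sub_apply]); ring
  rw [H.deriv]

lemma E8 :
    pdx (fun x y t => -a y * (1 + T a b x y t))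
      = fun x y t => -(a y ^ 2 / 2) * (1 - T a b x y t ^ 2) := by
  funext x y t
  simp only [pdx]
  have hT := Tx a b x y t
  have H : HasDerivAt (fun x' => -a y * (1 + T a b x' y t))
      (-(a y ^ 2 / 2) * (1 - T a b x y t ^ 2)) x := by
    have h := (hT.const_add 1).const_mul (-a y)
    refine h.congr_deriv ?_; (try simp only [Pi.neg_apply, Pi.pow_apply, Pi.mul_apply, Pi.add_apply, Pi.sub_apply]); ring
  rw [H.deriv]

lemma E9 (ha : ContDiff ℝ (⊤ : ℕ∞) a) (hb : ContDiff ℝ (⊤ : ℕ∞) b) :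
    pdy (fun x y t => -(a y ^ 2 / 2) * (1 - T a b x y t ^ 2))
      = fun x y t => (1 - T a b x y t ^ 2) *
          (-(a y * deriv a y) + a y ^ 2 / 2 * G a b x y t * T a b x y t) := by
  funext x y t
  simp only [pdy]
  have hay : HasDerivAt a (deriv a y) y := (ha.differentiable (by simp) y).hasDerivAt
  have hT := Ty a b ha hb x y t
  have H : HasDerivAt (fun y' => -(a y' ^ 2 / 2) * (1 - T a b x y' t ^ 2))
      ((1 - T a b x y t ^ 2) *
        (-(a y * deriv a y) + a y ^ 2 / 2 * G a b x y t * T a b x y t)) y := by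
    have h := (((hay.pow 2).div_const 2).neg).mul ((hT.pow 2).const_sub 1)
    refine h.congr_deriv ?_; (try simp only [Pi.neg_apply, Pi.pow_apply, Pi.mul_apply, Pi.add_apply, Pi.sub_apply]); ring
  rw [H.deriv]

lemma E10 :
    pdx (fun x y t =>
        (-a y * (1 + T a b x y t)) *
            (1 / 2 * a y * G a b x y t * (1 - T a b x y t ^ 2)
              + deriv a y * T a b x y t + deriv a y - 1)
          + (-a y * (1 + T a b x y t))
          + (1 - T a b x y t ^ 2) *
              (-(a y * deriv a y) + a y ^ 2 / 2 * G a b x y t * T a b x y t))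
      = fun x y t =>
          (-(a y ^ 2 / 2) * (1 - T a b x y t ^ 2)) *
              (1 / 2 * a y * G a b x y t * (1 - T a b x y t ^ 2)
                + deriv a y * T a b x y t + deriv a y - 1)
            + (-a y * (1 + T a b x y t)) *
              ((1 - T a b x y t ^ 2) *
                (a y * deriv a y - a y ^ 2 / 2 * G a b x y t * T a b x y t))
            + (-(a y ^ 2 / 2) * (1 - T a b x y t ^ 2))
            - (1 - T a b x y t ^ 2) *
              (-(3 / 2) * a y ^ 2 * deriv a y * T a b x y t
                + a y ^ 3 / 2 * G a b x y t * T a b x y t ^ 2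
                - a y ^ 3 / 4 * G a b x y t * (1 - T a b x y t ^ 2)) := by
  funext x y t
  simp only [pdx]
  have hT := Tx a b x y t
  have hG := Gx a b x y t
  have D1 : HasDerivAt (fun x' => -a y * (1 + T a b x' y t))
      (-a y * ((1 - T a b x y t ^ 2) * (a y / 2))) x := (hT.const_add 1).const_mul (-a y)
  have D2 : HasDerivAt (fun x' => 1 / 2 * a y * G a b x' y t * (1 - T a b x' y t ^ 2)
        + deriv a y * T a b x' y t + deriv a y - 1)
      ((deriv a y * (1 / 2 * a y) * (1 - T a b x y t ^ 2)
          + 1 / 2 * a y * G a b x y t *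
            -(2 * T a b x y t ^ 1 * ((1 - T a b x y t ^ 2) * (a y / 2))))
        + deriv a y * ((1 - T a b x y t ^ 2) * (a y / 2))) x := by
    have h := ((((hG.const_mul (1 / 2 * a y)).mul ((hT.pow 2).const_sub 1)).add
      (hT.const_mul (deriv a y))).add_const (deriv a y)).sub_const 1
    refine h.congr_deriv ?_; (try simp only [Pi.neg_apply, Pi.pow_apply, Pi.mul_apply, Pi.add_apply, Pi.sub_apply]); ring
  have D4 : HasDerivAt (fun x' => (1 - T a b x' y t ^ 2) *
        (-(a y * deriv a y) + a y ^ 2 / 2 * G a b x' y t * T a b x' y t))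
      (-(2 * T a b x y t ^ 1 * ((1 - T a b x y t ^ 2) * (a y / 2))) *
          (-(a y * deriv a y) + a y ^ 2 / 2 * G a b x y t * T a b x y t)
        + (1 - T a b x y t ^ 2) *
          ((deriv a y * (a y ^ 2 / 2) * T a b x y t
            + a y ^ 2 / 2 * G a b x y t * ((1 - T a b x y t ^ 2) * (a y / 2))))) x := by
    have h := ((hT.pow 2).const_sub 1).mul
      ((hG.const_mul (a y ^ 2 / 2)).mul hT |>.const_add (-(a y * deriv a y)))
    refine h.congr_deriv ?_; (try simp only [Pi.neg_apply, Pi.pow_apply, Pi.mul_apply, Pi.add_apply, Pi.sub_apply]); ring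
  have H := ((D1.mul D2).add D1).add D4
  erw [H.deriv]
  ring

end

/-- With `θ = a(y)x + a(y)²t + b(y)` for smooth `a, b`, the functions
`u = -a(y)(1 + tanh(θ/2))` and
`h = (1/2)a(y)(a'(y)x + 2a(y)a'(y)t + b'(y))sech²(θ/2) + a'(y)tanh(θ/2) + a'(y) - 1`
satisfy the (2+1)-dimensional dispersive long wave equations. -/
theorem dlw_exact_solution_minus (a b : ℝ → ℝ)
    (ha : ContDiff ℝ (⊤ : ℕ∞) a) (hb : ContDiff ℝ (⊤ : ℕ∞) b)
    (θ u h : ℝ → ℝ → ℝ → ℝ)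
    (hθ : θ = fun x y t => a y * x + (a y) ^ 2 * t + b y)
    (hu : u = fun x y t => -a y * (1 + Real.tanh (θ x y t / 2)))
    (hh : h = fun x y t =>
      (1 / 2) * a y * (deriv a y * x + 2 * a y * deriv a y * t + deriv b y)
          * (1 / Real.cosh (θ x y t / 2)) ^ 2
        + deriv a y * Real.tanh (θ x y t / 2) + deriv a y - 1) :
    (∀ x y t, pdt (pdy u) x y t + pdx (pdx h) x y t
        + (1 / 2) * pdy (pdx (fun a' b' c' => (u a' b' c') ^ 2)) x y t = 0) ∧
    (∀ x y t, pdt h x y t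
        + pdx (fun a' b' c' => u a' b' c' * h a' b' c' + u a' b' c'
            + pdy (pdx u) a' b' c') x y t = 0) := by
  subst hθ
  have hu' : u = fun x y t => -a y * (1 + T a b x y t) := hu
  have hh' : h = fun x y t => 1 / 2 * a y * G a b x y t * (1 - T a b x y t ^ 2)
      + deriv a y * T a b x y t + deriv a y - 1 := by
    funext x y t
    simp only [hh]
    rw [sech_sq]
    rfl
  simp only [hu', hh']
  constructor
  · intro x y t
    simp only [E1 a b ha hb, E2, E5, E6 a b ha hb, E3, E4]
    ring
  · intro x y t
    simp only [E8, E9 a b ha hb, E7, E10]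
    ring
end
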